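/- arXiv:2503.21535 — 6 statements merged into one kernel-verified Lean document; each statement's English description precedes it below -/
import Mathlib

section
/- Let p be a prime with p ≡ 3 (mod 4), let μ, ν ∈ B_{p,∞}, and let d₁₁, d₁₂, d₂₁, d₂₂ be natural numbers such that Nrd(μ) = d₁₂·d₁₁ and Nrd(ν) = d₂₂·d₂₁. Then Nrd(μ + ν) ≤ (d₁₁ + d₂₁)·(d₁₂ + d₂₂). (This is the inequality proved in the paper's improvement of Kani's degree formula, showing that the absolute value in the formula deg(φ) = |(d₁₁+d₂₁)(d₁₂+d₂₂) − deg(φ̂₁₂φ₁₁ + φ̂₂₂φ₂₁)| is unnecessary.) -/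
open Quaternion

/-- The reduced norm on the quaternion algebra `B_{p,∞} = ℍ[ℚ, -1, -p]`:
`Nrd(α) = α · ᾱ = a² + b² + p(c² + d²)`. -/
def Nrd {p : ℕ} (α : ℍ[ℚ, -1, -(p : ℚ)]) : ℚ := (α * star α).re

/-- The key inequality in the improvement of Kani's degree formula: if
`Nrd μ = d₁₂ d₁₁` and `Nrd ν = d₂₂ d₂₁`, then
`Nrd (μ + ν) ≤ (d₁₁ + d₂₁)(d₁₂ + d₂₂)`. -/
theorem nrd_add_le (p : ℕ) (hp : p.Prime) (hp4 : p % 4 = 3)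
    (μ ν : ℍ[ℚ, -1, -(p : ℚ)]) (d₁₁ d₁₂ d₂₁ d₂₂ : ℕ)
    (hμ : Nrd μ = (d₁₂ : ℚ) * (d₁₁ : ℚ))
    (hν : Nrd ν = (d₂₂ : ℚ) * (d₂₁ : ℚ)) :
    Nrd (μ + ν) ≤ ((d₁₁ : ℚ) + (d₂₁ : ℚ)) * ((d₁₂ : ℚ) + (d₂₂ : ℚ)) := by
  obtain ⟨a₁, b₁, c₁, e₁⟩ := μ
  obtain ⟨a₂, b₂, c₂, e₂⟩ := ν
  simp only [Nrd, QuaternionAlgebra.re_mul, QuaternionAlgebra.re_add,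
    QuaternionAlgebra.imI_add, QuaternionAlgebra.imJ_add, QuaternionAlgebra.imK_add,
    QuaternionAlgebra.re_star, QuaternionAlgebra.imI_star, QuaternionAlgebra.imJ_star,
    QuaternionAlgebra.imK_star] at *
  ring_nf at *
  have hp0 : (0:ℚ) ≤ (p:ℚ) := by positivity
  have h11 : (0:ℚ) ≤ d₁₁ := by positivity
  have h12 : (0:ℚ) ≤ d₁₂ := by positivity
  have h21 : (0:ℚ) ≤ d₂₁ := by positivity
  have h22 : (0:ℚ) ≤ d₂₂ := by positivity
  set B : ℚ := a₁*a₂ + b₁*b₂ + (p:ℚ)*(c₁*c₂) + (p:ℚ)*(e₁*e₂) with hB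
  have hCS : B^2 ≤ ((d₁₂:ℚ)*d₁₁) * ((d₂₂:ℚ)*d₂₁) := by
    have h1 : ((d₁₂:ℚ)*d₁₁) * ((d₂₂:ℚ)*d₂₁)
        = (a₁^2 + b₁^2 + (p:ℚ)*c₁^2 + (p:ℚ)*e₁^2) * (a₂^2 + b₂^2 + (p:ℚ)*c₂^2 + (p:ℚ)*e₂^2) := by
      linear_combination (-((d₂₁:ℚ)*d₂₂)) * hμ - (a₁^2 + b₁^2 + (p:ℚ)*c₁^2 + (p:ℚ)*e₁^2) * hν
    rw [h1, hB]
    nlinarith [sq_nonneg (a₁*b₂ - a₂*b₁), mul_nonneg hp0 (sq_nonneg (a₁*c₂ - a₂*c₁)),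
      mul_nonneg hp0 (sq_nonneg (a₁*e₂ - a₂*e₁)), mul_nonneg hp0 (sq_nonneg (b₁*c₂ - b₂*c₁)),
      mul_nonneg hp0 (sq_nonneg (b₁*e₂ - b₂*e₁)),
      mul_nonneg (mul_nonneg hp0 hp0) (sq_nonneg (c₁*e₂ - c₂*e₁))]
  have hS : (0:ℚ) ≤ (d₁₁:ℚ)*d₂₂ + (d₂₁:ℚ)*d₁₂ := by positivity
  have h2B : 2*B ≤ (d₁₁:ℚ)*d₂₂ + (d₂₁:ℚ)*d₁₂ := by
    have hsq : (2*B)^2 ≤ ((d₁₁:ℚ)*d₂₂ + (d₂₁:ℚ)*d₁₂)^2 := by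
      nlinarith [hCS, sq_nonneg ((d₁₁:ℚ)*d₂₂ - (d₂₁:ℚ)*d₁₂)]
    exact (abs_le_of_sq_le_sq' hsq hS).2
  linarith [h2B, hB, hμ, hν]
end

section
/- Let p be a prime with p ≡ 3 (mod 4), let μ, ν ∈ B_{p,∞}, and let d₁₁, d₁₂, d₂₁, d₂₂ be natural numbers such that Nrd(μ) = d₁₂·d₁₁ and Nrd(ν) = d₂₂·d₂₁. Then Nrd(d₂₁·μ − d₁₁·ν) = d₁₁·d₂₁·((d₁₁ + d₂₁)·(d₁₂ + d₂₂) − Nrd(μ + ν)). (This identity is the algebraic core of the paper's criterion that a 2×2 matrix of isogenies (φ_{ij}) is an isomorphism if and only if deg(d₂₁μ − d₁₁ν) = d₁₁d₂₁, where μ = φ̂₁₂φ₁₁ and ν = φ̂₂₂φ₂₁.) -/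
set_option maxHeartbeats 1000000


open Quaternion

/-- The algebraic core of the isomorphism criterion: if `Nrd μ = d₁₂ d₁₁` and
`Nrd ν = d₂₂ d₂₁`, then
`Nrd (d₂₁ μ - d₁₁ ν) = d₁₁ d₂₁ ((d₁₁ + d₂₁)(d₁₂ + d₂₂) - Nrd (μ + ν))`. -/
theorem nrd_sub_eq (p : ℕ) (hp : p.Prime) (hp4 : p % 4 = 3)
    (μ ν : ℍ[ℚ, -1, -(p : ℚ)]) (d₁₁ d₁₂ d₂₁ d₂₂ : ℕ)
    (hμ : Nrd μ = (d₁₂ : ℚ) * (d₁₁ : ℚ))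
    (hν : Nrd ν = (d₂₂ : ℚ) * (d₂₁ : ℚ)) :
    Nrd ((d₂₁ : ℍ[ℚ, -1, -(p : ℚ)]) * μ - (d₁₁ : ℍ[ℚ, -1, -(p : ℚ)]) * ν) =
      (d₁₁ : ℚ) * (d₂₁ : ℚ) *
        (((d₁₁ : ℚ) + (d₂₁ : ℚ)) * ((d₁₂ : ℚ) + (d₂₂ : ℚ)) - Nrd (μ + ν)) := by
  simp only [Nrd, QuaternionAlgebra.re_mul, QuaternionAlgebra.re_sub,
    QuaternionAlgebra.imI_sub, QuaternionAlgebra.imJ_sub, QuaternionAlgebra.imK_sub,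
    QuaternionAlgebra.re_add, QuaternionAlgebra.imI_add, QuaternionAlgebra.imJ_add,
    QuaternionAlgebra.imK_add, QuaternionAlgebra.re_star, QuaternionAlgebra.imI_star,
    QuaternionAlgebra.imJ_star, QuaternionAlgebra.imK_star, QuaternionAlgebra.imI_mul,
    QuaternionAlgebra.imJ_mul, QuaternionAlgebra.imK_mul, QuaternionAlgebra.re_natCast, QuaternionAlgebra.imI_natCast, QuaternionAlgebra.imJ_natCast, QuaternionAlgebra.imK_natCast, QuaternionAlgebra.re_coe,
    QuaternionAlgebra.imI_coe, QuaternionAlgebra.imJ_coe, QuaternionAlgebra.imK_coe] at *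
  linear_combination ((d₂₁:ℚ)^2 + (d₁₁:ℚ)*d₂₁) * hμ + ((d₁₁:ℚ)^2 + (d₁₁:ℚ)*d₂₁) * hν
end

section
/- Let ℓ be a prime. The left ideals of M₂(ℤ_[ℓ]) of finite additive index are exactly the ideals of the form M₂(ℤ_[ℓ])·A where A is the upper-triangular matrix with rows (ℓⁿ, r) and (0, ℓᵐ), for natural numbers n, m and an integer r with 0 ≤ r < ℓᵐ; moreover, distinct triples (n, m, r) with 0 ≤ r < ℓᵐ give distinct left ideals. -/
open Matrix

namespace LeftIdealsM2Aux

variable (p : ℕ) [Fact p.Prime]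

lemma pnz : (p : ℤ_[p]) ≠ 0 := PadicInt.prime_p.ne_zero

lemma pow_span_inj {n m : ℕ}
    (h : Ideal.span {(p : ℤ_[p]) ^ n} = Ideal.span {(p : ℤ_[p]) ^ m}) : n = m := by
  have h1 : (p : ℤ_[p]) ^ m ∣ (p : ℤ_[p]) ^ n :=
    Ideal.span_singleton_le_span_singleton.mp h.le
  have h2 : (p : ℤ_[p]) ^ n ∣ (p : ℤ_[p]) ^ m :=
    Ideal.span_singleton_le_span_singleton.mp h.ge
  have hnu : ¬ IsUnit (p : ℤ_[p]) := PadicInt.prime_p.not_unit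
  exact le_antisymm ((pow_dvd_pow_iff (pnz p) hnu).mp h2)
    ((pow_dvd_pow_iff (pnz p) hnu).mp h1)

/-- inclusion of the second coordinate as a linear map -/
noncomputable def ins2 : ℤ_[p] →ₗ[ℤ_[p]] (Fin 2 → ℤ_[p]) where
  toFun b := ![0, b]
  map_add' x y := by funext i; fin_cases i <;> simp
  map_smul' c x := by funext i; fin_cases i <;> simp

lemma mem_span_pair_vec {n m r : ℕ} {v : Fin 2 → ℤ_[p]} :
    v ∈ Submodule.span ℤ_[p]
        ({![(p:ℤ_[p])^n, (r:ℤ_[p])], ![0, (p:ℤ_[p])^m]} : Set (Fin 2 → ℤ_[p])) ↔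
      ∃ c d : ℤ_[p], v 0 = c * (p:ℤ_[p])^n ∧ v 1 = c * (r:ℤ_[p]) + d * (p:ℤ_[p])^m := by
  rw [Submodule.mem_span_pair]
  constructor
  · rintro ⟨c, d, rfl⟩
    exact ⟨c, d, by simp, by simp⟩
  · rintro ⟨c, d, h0, h1⟩
    refine ⟨c, d, ?_⟩
    funext i
    fin_cases i <;> simp [h0, h1]

lemma submodule_classify (L : Submodule ℤ_[p] (Fin 2 → ℤ_[p]))
    (ha : ∃ a : ℤ_[p], a ≠ 0 ∧ ![a, 0] ∈ L)
    (hb : ∃ b : ℤ_[p], b ≠ 0 ∧ ![0, b] ∈ L) :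
    ∃ n m r : ℕ, r < p ^ m ∧
      L = Submodule.span ℤ_[p] {![(p:ℤ_[p])^n, (r:ℤ_[p])], ![0, (p:ℤ_[p])^m]} := by
  obtain ⟨a, ha0, haL⟩ := ha
  obtain ⟨b, hb0, hbL⟩ := hb
  set J : Ideal ℤ_[p] := L.map (LinearMap.proj 0) with hJdef
  have hJne : J ≠ ⊥ := by
    intro h
    apply ha0
    have : a ∈ J := ⟨![a, 0], haL, by simp⟩
    rw [h] at this
    simpa using this
  obtain ⟨n, hJ⟩ := PadicInt.ideal_eq_span_pow_p hJne
  set K : Ideal ℤ_[p] := L.comap (ins2 p) with hKdef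
  have hKmem : ∀ x : ℤ_[p], x ∈ K ↔ ![0, x] ∈ L := fun x => Iff.rfl
  have hKne : K ≠ ⊥ := by
    intro h
    apply hb0
    have : b ∈ K := (hKmem b).mpr hbL
    rw [h] at this
    simpa using this
  obtain ⟨m, hK⟩ := PadicInt.ideal_eq_span_pow_p hKne
  haveI : NeZero (p ^ m) := ⟨pow_ne_zero m (Fact.out (p := p.Prime)).ne_zero⟩
  have hpnJ : (p:ℤ_[p])^n ∈ J := hJ ▸ Ideal.mem_span_singleton_self _
  obtain ⟨v, hvL, hv0⟩ := hpnJ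
  rw [LinearMap.proj_apply] at hv0
  set r : ℕ := (PadicInt.toZModPow m (v 1)).val with hrdef
  have hr : r < p ^ m := ZMod.val_lt _
  have hsr : v 1 - (r:ℤ_[p]) ∈ Ideal.span {(p:ℤ_[p])^m} := by
    rw [← PadicInt.ker_toZModPow, RingHom.mem_ker, map_sub, map_natCast, hrdef,
      ZMod.natCast_val, ZMod.cast_id, sub_self]
  obtain ⟨t, ht⟩ := Ideal.mem_span_singleton'.mp hsr
  refine ⟨n, m, r, hr, ?_⟩
  have hw2L : ![0, (p:ℤ_[p])^m] ∈ L :=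
    (hKmem _).mp (hK ▸ Ideal.mem_span_singleton_self _)
  have hw1L : ![(p:ℤ_[p])^n, (r:ℤ_[p])] ∈ L := by
    have heq : ![(p:ℤ_[p])^n, (r:ℤ_[p])] = v - t • ![0, (p:ℤ_[p])^m] := by
      funext i
      fin_cases i
      · simp [hv0]
      · simp only [Fin.mk_one, Fin.isValue, Matrix.cons_val_one, Matrix.head_cons,
          Pi.sub_apply, Pi.smul_apply, smul_eq_mul, Matrix.cons_val_zero]
        linear_combination ht
    rw [heq]
    exact sub_mem hvL (L.smul_mem t hw2L)
  apply le_antisymm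
  · intro u huL
    rw [mem_span_pair_vec]
    have hu0 : u 0 ∈ J := ⟨u, huL, rfl⟩
    rw [hJ] at hu0
    obtain ⟨c, hc⟩ := Ideal.mem_span_singleton'.mp hu0
    have hx : ![0, u 1 - c * (r:ℤ_[p])] ∈ L := by
      have heq : ![0, u 1 - c * (r:ℤ_[p])] = u - c • ![(p:ℤ_[p])^n, (r:ℤ_[p])] := by
        funext i
        fin_cases i
        · simp only [Fin.mk_zero, Fin.isValue, Matrix.cons_val_zero, Pi.sub_apply,
            Pi.smul_apply, smul_eq_mul]
          linear_combination hc
        · simp only [Fin.mk_one, Fin.isValue, Matrix.cons_val_one, Matrix.head_cons,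
            Pi.sub_apply, Pi.smul_apply, smul_eq_mul, Matrix.cons_val_zero]
      rw [heq]
      exact sub_mem huL (L.smul_mem c hw1L)
    have hxK : u 1 - c * (r:ℤ_[p]) ∈ K := (hKmem _).mpr hx
    rw [hK] at hxK
    obtain ⟨d, hd⟩ := Ideal.mem_span_singleton'.mp hxK
    exact ⟨c, d, hc.symm, by linear_combination -hd⟩
  · rw [Submodule.span_le]
    rintro w (rfl | rfl)
    · exact hw1L
    · exact hw2L

lemma proj_span_pair (N M R : ℕ) :
    (Submodule.span ℤ_[p]
        ({![(p:ℤ_[p])^N, (R:ℤ_[p])], ![0, (p:ℤ_[p])^M]} : Set (Fin 2 → ℤ_[p]))).map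
      (LinearMap.proj 0) = Ideal.span {(p:ℤ_[p])^N} := by
  rw [Submodule.map_span]
  have himg : (LinearMap.proj 0 : (Fin 2 → ℤ_[p]) →ₗ[ℤ_[p]] ℤ_[p]) ''
      {![(p:ℤ_[p])^N, (R:ℤ_[p])], ![0, (p:ℤ_[p])^M]} = {(p:ℤ_[p])^N, 0} := by
    simp [Set.image_insert_eq, Set.image_singleton]
  rw [himg, Set.pair_comm, Submodule.span_insert_zero]

lemma span_pair_uniq (n m r n' m' r' : ℕ) (hr : r < p^m) (hr' : r' < p^m')
    (h : Submodule.span ℤ_[p]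
          ({![(p:ℤ_[p])^n, (r:ℤ_[p])], ![0, (p:ℤ_[p])^m]} : Set (Fin 2 → ℤ_[p])) =
        Submodule.span ℤ_[p] {![(p:ℤ_[p])^n', (r':ℤ_[p])], ![0, (p:ℤ_[p])^m']}) :
    n = n' ∧ m = m' ∧ r = r' := by
  haveI : NeZero (p ^ m) := ⟨pow_ne_zero m (Fact.out (p := p.Prime)).ne_zero⟩
  have hpn : (p:ℤ_[p])^n ≠ 0 := pow_ne_zero _ (pnz p)
  -- n = n'
  have hnn' : n = n' := by
    apply pow_span_inj p
    rw [← proj_span_pair p n m r, ← proj_span_pair p n' m' r', h]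
  -- m = m'
  have hK : ∀ (N M R : ℕ) (x : ℤ_[p]),
      ![0, x] ∈ Submodule.span ℤ_[p]
        ({![(p:ℤ_[p])^N, (R:ℤ_[p])], ![0, (p:ℤ_[p])^M]} : Set (Fin 2 → ℤ_[p])) ↔
      x ∈ Ideal.span {(p:ℤ_[p])^M} := by
    intro N M R x
    rw [mem_span_pair_vec p, Ideal.mem_span_singleton']
    constructor
    · rintro ⟨c, d, h0, h1⟩
      simp only [Matrix.cons_val_zero, Matrix.cons_val_one, Matrix.head_cons] at h0 h1
      have hc0 : c = 0 := by
        rcases mul_eq_zero.mp h0.symm with hc | hp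
        · exact hc
        · exact absurd hp (pow_ne_zero _ (pnz p))
      exact ⟨d, by rw [h1, hc0, zero_mul, zero_add]⟩
    · rintro ⟨d, hd⟩
      exact ⟨0, d, by simp, by simp [← hd]⟩
  have hmm' : m = m' := by
    apply pow_span_inj p
    ext x
    rw [← hK n m r x, ← hK n' m' r' x, h]
  -- r = r'
  subst hnn' hmm'
  refine ⟨rfl, rfl, ?_⟩
  have hw1 : ![(p:ℤ_[p])^n, (r:ℤ_[p])] ∈ Submodule.span ℤ_[p]
      ({![(p:ℤ_[p])^n, (r':ℤ_[p])], ![0, (p:ℤ_[p])^m]} : Set (Fin 2 → ℤ_[p])) := by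
    rw [← h]
    exact Submodule.subset_span (Set.mem_insert _ _)
  rw [mem_span_pair_vec] at hw1
  obtain ⟨c, d, h0, h1⟩ := hw1
  simp only [Matrix.cons_val_zero, Matrix.cons_val_one, Matrix.head_cons] at h0 h1
  have hc1 : c = 1 := by
    have h0' : c * (p:ℤ_[p])^n = 1 * (p:ℤ_[p])^n := by rw [one_mul, ← h0]
    exact mul_right_cancel₀ hpn h0'
  rw [hc1, one_mul] at h1
  have hker : (PadicInt.toZModPow (p := p) m) ((p:ℤ_[p])^m) = 0 := by
    rw [← RingHom.mem_ker, PadicInt.ker_toZModPow]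
    exact Ideal.mem_span_singleton_self _
  have hmod : (r : ZMod (p^m)) = (r' : ZMod (p^m)) := by
    have h2 := congrArg (PadicInt.toZModPow m) h1
    rwa [map_natCast, map_add, map_natCast, _root_.map_mul, hker, mul_zero, add_zero] at h2
  rw [← ZMod.val_natCast_of_lt hr, ← ZMod.val_natCast_of_lt hr', hmod]


/-- the matrix with first row `v` and second row `0` -/
noncomputable def rowMat (v : Fin 2 → ℤ_[p]) : Matrix (Fin 2) (Fin 2) ℤ_[p] :=
  Matrix.of ![v, 0]

@[simp] lemma rowMat_row0 (v : Fin 2 → ℤ_[p]) : rowMat p v 0 = v := rfl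

@[simp] lemma rowMat_row1 (v : Fin 2 → ℤ_[p]) : rowMat p v 1 = 0 := rfl

lemma row_mem_span_matrix (A B : Matrix (Fin 2) (Fin 2) ℤ_[p]) :
    B ∈ Ideal.span {A} ↔
      ∀ i, B i ∈ Submodule.span ℤ_[p] ({A 0, A 1} : Set (Fin 2 → ℤ_[p])) := by
  rw [← Ideal.submodule_span_eq, Submodule.mem_span_singleton]
  constructor
  · rintro ⟨C, rfl⟩ i
    rw [Submodule.mem_span_pair]
    refine ⟨C i 0, C i 1, ?_⟩
    funext j
    simp [smul_eq_mul, Matrix.mul_apply, Fin.sum_univ_two]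
  · intro h
    choose c d hcd using fun i => Submodule.mem_span_pair.mp (h i)
    refine ⟨Matrix.of (fun i => ![c i, d i]), ?_⟩
    show Matrix.of (fun i => ![c i, d i]) * A = B
    ext i j
    have hij := congrFun (hcd i) j
    simp only [Pi.add_apply, Pi.smul_apply, smul_eq_mul] at hij
    simpa [Matrix.mul_apply, Fin.sum_univ_two] using hij

/-- the submodule of rows of a left ideal -/
noncomputable def rowSub (I : Ideal (Matrix (Fin 2) (Fin 2) ℤ_[p])) :
    Submodule ℤ_[p] (Fin 2 → ℤ_[p]) where
  carrier := {v | rowMat p v ∈ I}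
  add_mem' := by
    intro u v hu hv
    have : rowMat p (u + v) = rowMat p u + rowMat p v := by
      ext i j; fin_cases i <;> simp [rowMat]
    simp only [Set.mem_setOf_eq, this]
    exact add_mem hu hv
  zero_mem' := by
    have : rowMat p (0 : Fin 2 → ℤ_[p]) = 0 := by
      ext i j; fin_cases i <;> simp [rowMat]
    simp only [Set.mem_setOf_eq, this]
    exact zero_mem _
  smul_mem' := by
    intro c v hv
    have : rowMat p (c • v) = (algebraMap ℤ_[p] (Matrix (Fin 2) (Fin 2) ℤ_[p]) c) *
        rowMat p v := by
      rw [← Algebra.smul_def]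
      ext i j; fin_cases i <;> simp [rowMat]
    simp only [Set.mem_setOf_eq, this]
    exact Ideal.mul_mem_left I _ hv

lemma mem_rowSub (I : Ideal (Matrix (Fin 2) (Fin 2) ℤ_[p])) (v : Fin 2 → ℤ_[p]) :
    v ∈ rowSub p I ↔ rowMat p v ∈ I := Iff.rfl

lemma mem_iff_rows (I : Ideal (Matrix (Fin 2) (Fin 2) ℤ_[p]))
    (B : Matrix (Fin 2) (Fin 2) ℤ_[p]) :
    B ∈ I ↔ (B 0 ∈ rowSub p I ∧ B 1 ∈ rowSub p I) := by
  constructor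
  · intro hB
    constructor
    · have h : rowMat p (B 0) = !![(1:ℤ_[p]),0;0,0] * B := by
        ext i j; fin_cases i <;> simp [rowMat, Matrix.mul_apply, Fin.sum_univ_two]
      rw [mem_rowSub, h]
      exact Ideal.mul_mem_left I _ hB
    · have h : rowMat p (B 1) = !![(0:ℤ_[p]),1;0,0] * B := by
        ext i j; fin_cases i <;> simp [rowMat, Matrix.mul_apply, Fin.sum_univ_two]
      rw [mem_rowSub, h]
      exact Ideal.mul_mem_left I _ hB
  · rintro ⟨h0, h1⟩
    have h : B = rowMat p (B 0) + !![(0:ℤ_[p]),0;1,0] * rowMat p (B 1) := by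
      ext i j; fin_cases i <;> fin_cases j <;>
        simp [rowMat, Matrix.mul_apply, Fin.sum_univ_two]
    rw [h]
    exact add_mem h0 (Ideal.mul_mem_left I _ h1)

lemma hnf_row0 (n m r : ℕ) :
    (!![(p:ℤ_[p])^n, (r:ℤ_[p]); 0, (p:ℤ_[p])^m]) 0 = ![(p:ℤ_[p])^n, (r:ℤ_[p])] := rfl

lemma hnf_row1 (n m r : ℕ) :
    (!![(p:ℤ_[p])^n, (r:ℤ_[p]); 0, (p:ℤ_[p])^m]) 1 = ![0, (p:ℤ_[p])^m] := rfl

lemma key_iff (n m r : ℕ) (v : Fin 2 → ℤ_[p]) :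
    v ∈ Submodule.span ℤ_[p]
        ({![(p:ℤ_[p])^n, (r:ℤ_[p])], ![0, (p:ℤ_[p])^m]} : Set (Fin 2 → ℤ_[p])) ↔
      rowMat p v ∈ Ideal.span {!![(p:ℤ_[p])^n, (r:ℤ_[p]); 0, (p:ℤ_[p])^m]} := by
  rw [row_mem_span_matrix, hnf_row0, hnf_row1]
  constructor
  · intro hv i
    fin_cases i
    · simpa using hv
    · simp only [Fin.mk_one, rowMat_row1]
      exact zero_mem _
  · intro h
    simpa using h 0

end LeftIdealsM2Aux


open LeftIdealsM2Aux in
/-- Classification of the left ideals of finite additive index in `M₂(ℤ_ℓ)`: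
they are exactly the left ideals generated by an upper-triangular matrix in Hermite
Normal Form `!![ℓ^n, r; 0, ℓ^m]` with `0 ≤ r < ℓ^m`, and distinct triples `(n, m, r)`
give distinct left ideals. -/
theorem left_ideals_M2_Zl_classification (ℓ : ℕ) [Fact ℓ.Prime] :
    (∀ I : Ideal (Matrix (Fin 2) (Fin 2) ℤ_[ℓ]),
      Finite (Matrix (Fin 2) (Fin 2) ℤ_[ℓ] ⧸ I) ↔
        ∃ n m r : ℕ, r < ℓ ^ m ∧
          I = Ideal.span {!![(ℓ : ℤ_[ℓ]) ^ n, (r : ℤ_[ℓ]); 0, (ℓ : ℤ_[ℓ]) ^ m]}) ∧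
    (∀ n m r n' m' r' : ℕ, r < ℓ ^ m → r' < ℓ ^ m' →
      (Ideal.span {!![(ℓ : ℤ_[ℓ]) ^ n, (r : ℤ_[ℓ]); 0, (ℓ : ℤ_[ℓ]) ^ m]} :
          Ideal (Matrix (Fin 2) (Fin 2) ℤ_[ℓ])) =
        Ideal.span {!![(ℓ : ℤ_[ℓ]) ^ n', (r' : ℤ_[ℓ]); 0, (ℓ : ℤ_[ℓ]) ^ m']} →
      n = n' ∧ m = m' ∧ r = r') := by
  constructor
  · intro I
    constructor
    · intro hFin
      have hnz : ∀ X : Matrix (Fin 2) (Fin 2) ℤ_[ℓ], ∃ c : ℤ_[ℓ], c ≠ 0 ∧ c • X ∈ I := by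
        intro X
        obtain ⟨c, c', hne, heq⟩ := Finite.exists_ne_map_eq_of_infinite
          (fun c : ℤ_[ℓ] =>
            (Submodule.Quotient.mk (c • X) : Matrix (Fin 2) (Fin 2) ℤ_[ℓ] ⧸ I))
        refine ⟨c - c', sub_ne_zero.mpr hne, ?_⟩
        have h2 := (Submodule.Quotient.eq I).mp heq
        rwa [← sub_smul] at h2
      obtain ⟨a, ha0, haI⟩ := hnz !![1,0;0,0]
      obtain ⟨b, hb0, hbI⟩ := hnz !![0,1;0,0]
      have haL : ![a, 0] ∈ rowSub ℓ I := by
        rw [mem_rowSub]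
        have heq : rowMat ℓ ![a, 0] = a • !![(1:ℤ_[ℓ]),0;0,0] := by
          ext i j; fin_cases i <;> fin_cases j <;> simp [rowMat]
        rwa [heq]
      have hbL : ![0, b] ∈ rowSub ℓ I := by
        rw [mem_rowSub]
        have heq : rowMat ℓ ![0, b] = b • !![(0:ℤ_[ℓ]),1;0,0] := by
          ext i j; fin_cases i <;> fin_cases j <;> simp [rowMat]
        rwa [heq]
      obtain ⟨n, m, r, hr, hL⟩ :=
        submodule_classify ℓ (rowSub ℓ I) ⟨a, ha0, haL⟩ ⟨b, hb0, hbL⟩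
      refine ⟨n, m, r, hr, ?_⟩
      ext B
      rw [mem_iff_rows ℓ I B, row_mem_span_matrix, hnf_row0, hnf_row1]
      constructor
      · rintro ⟨h0, h1⟩ i
        rw [hL] at h0 h1
        fin_cases i
        · simpa using h0
        · simpa using h1
      · intro h
        constructor
        · rw [hL]; simpa using h 0
        · rw [hL]; simpa using h 1
    · rintro ⟨n, m, r, hr, rfl⟩
      set k := n + m with hk
      haveI : NeZero (ℓ ^ k) := ⟨pow_ne_zero k (Fact.out (p := ℓ.Prime)).ne_zero⟩
      set A := !![(ℓ:ℤ_[ℓ])^n, (r:ℤ_[ℓ]); 0, (ℓ:ℤ_[ℓ])^m] with hA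
      have hadj : !![(ℓ:ℤ_[ℓ])^m, -(r:ℤ_[ℓ]); 0, (ℓ:ℤ_[ℓ])^n] * A =
          ((ℓ:ℤ_[ℓ])^k) • (1 : Matrix (Fin 2) (Fin 2) ℤ_[ℓ]) := by
        ext i j
        fin_cases i <;> fin_cases j <;>
          simp [hA, hk, Matrix.mul_apply, Fin.sum_univ_two, Matrix.one_apply, pow_add] <;>
          ring
      have hscal : ((ℓ:ℤ_[ℓ])^k) • (1 : Matrix (Fin 2) (Fin 2) ℤ_[ℓ]) ∈
          Ideal.span {A} := by
        rw [← hadj]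
        exact Ideal.mul_mem_left _ _ (Ideal.subset_span rfl)
      have hker : ∀ B : Matrix (Fin 2) (Fin 2) ℤ_[ℓ],
          (∀ i j, PadicInt.toZModPow k (B i j) = 0) → B ∈ Ideal.span {A} := by
        intro B hB
        have hdvd : ∀ i j, ∃ c : ℤ_[ℓ], B i j = c * (ℓ:ℤ_[ℓ])^k := by
          intro i j
          have hm : B i j ∈ Ideal.span {(ℓ:ℤ_[ℓ])^k} := by
            rw [← PadicInt.ker_toZModPow, RingHom.mem_ker]
            exact hB i j
          obtain ⟨c, hc⟩ := Ideal.mem_span_singleton'.mp hm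
          exact ⟨c, hc.symm⟩
        choose C hC using hdvd
        have heq : B = Matrix.of C * (((ℓ:ℤ_[ℓ])^k) •
            (1 : Matrix (Fin 2) (Fin 2) ℤ_[ℓ])) := by
          rw [mul_smul_comm, mul_one]
          ext i j
          rw [Matrix.smul_apply, Matrix.of_apply, smul_eq_mul, mul_comm]
          exact hC i j
        rw [heq]
        exact Ideal.mul_mem_left _ _ hscal
      let σ : Matrix (Fin 2) (Fin 2) (ZMod (ℓ^k)) → Matrix (Fin 2) (Fin 2) ℤ_[ℓ] :=
        fun X => Matrix.of fun i j => ((X i j).val : ℤ_[ℓ])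
      have hσ : ∀ X i j, PadicInt.toZModPow k (σ X i j) = X i j := by
        intro X i j
        simp only [σ, Matrix.of_apply, map_natCast, ZMod.natCast_zmod_val]
      have hsurj : Function.Surjective
          (fun X : Matrix (Fin 2) (Fin 2) (ZMod (ℓ^k)) =>
            (Submodule.Quotient.mk (σ X) :
              Matrix (Fin 2) (Fin 2) ℤ_[ℓ] ⧸ Ideal.span {A})) := by
        intro q
        obtain ⟨B, rfl⟩ := Submodule.Quotient.mk_surjective _ q
        refine ⟨Matrix.of fun i j => PadicInt.toZModPow k (B i j), ?_⟩
        rw [Submodule.Quotient.eq]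
        apply hker
        intro i j
        rw [Matrix.sub_apply, map_sub, hσ, Matrix.of_apply, sub_self]
      exact Finite.of_surjective _ hsurj
  · intro n m r n' m' r' hr hr' h
    apply span_pair_uniq ℓ n m r n' m' r' hr hr'
    ext v
    rw [key_iff, key_iff, h]
end

section
/- Let ℓ be a prime, let n₁ ≤ n₂ and m₁, m₂ be natural numbers, and let r₁, r₂ be integers with 0 ≤ rᵢ < ℓ^{mᵢ}. For i ∈ {1,2} let Aᵢ ∈ M₂(ℤ_[ℓ]) be the matrix with rows (ℓ^{nᵢ}, rᵢ) and (0, ℓ^{mᵢ}). Let m = min(m₁, m₂, v_ℓ(r₂ − ℓ^{n₂−n₁}·r₁)), where v_ℓ denotes the ℓ-adic valuation on ℤ and the last term is omitted (i.e. treated as +∞) when r₂ = ℓ^{n₂−n₁}·r₁. Then the left ideal M₂(ℤ_[ℓ])·A₁ + M₂(ℤ_[ℓ])·A₂ equals the left ideal M₂(ℤ_[ℓ])·G, where G is the matrix with rows (ℓ^{n₁}, r₁ mod ℓᵐ) and (0, ℓᵐ). (Right-gcd of two matrices in Hermite Normal Form.) -/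
/-- Right-gcd of two matrices in Hermite Normal Form over `ℤ_ℓ`: with
`Aᵢ = !![ℓ^nᵢ, rᵢ; 0, ℓ^mᵢ]`, `n₁ ≤ n₂`, `0 ≤ rᵢ < ℓ^mᵢ`, and
`m = min(m₁, m₂, v_ℓ(r₂ - ℓ^(n₂-n₁) r₁))` (the last term omitted when
`r₂ = ℓ^(n₂-n₁) r₁`), the left ideal generated by `A₁` and `A₂` is generated by
`!![ℓ^n₁, r₁ mod ℓ^m; 0, ℓ^m]`. -/
theorem rgcd_HNF (ℓ : ℕ) [Fact ℓ.Prime] (n₁ n₂ m₁ m₂ : ℕ) (hn : n₁ ≤ n₂)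
    (r₁ r₂ : ℤ) (hr₁ : 0 ≤ r₁) (hr₁' : r₁ < (ℓ : ℤ) ^ m₁)
    (hr₂ : 0 ≤ r₂) (hr₂' : r₂ < (ℓ : ℤ) ^ m₂)
    (m : ℕ)
    (hm : m = if r₂ = (ℓ : ℤ) ^ (n₂ - n₁) * r₁ then min m₁ m₂
      else min (min m₁ m₂) (padicValInt ℓ (r₂ - (ℓ : ℤ) ^ (n₂ - n₁) * r₁))) :
    (Ideal.span {!![(ℓ : ℤ_[ℓ]) ^ n₁, ((r₁ : ℤ) : ℤ_[ℓ]); 0, (ℓ : ℤ_[ℓ]) ^ m₁]} :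
        Ideal (Matrix (Fin 2) (Fin 2) ℤ_[ℓ])) ⊔
      Ideal.span {!![(ℓ : ℤ_[ℓ]) ^ n₂, ((r₂ : ℤ) : ℤ_[ℓ]); 0, (ℓ : ℤ_[ℓ]) ^ m₂]} =
    Ideal.span {!![(ℓ : ℤ_[ℓ]) ^ n₁, ((r₁ % (ℓ : ℤ) ^ m : ℤ) : ℤ_[ℓ]);
      0, (ℓ : ℤ_[ℓ]) ^ m]} := by
  have hm1 : m ≤ m₁ := by
    rw [hm]; split
    · exact min_le_left _ _
    · exact le_trans (min_le_left _ _) (min_le_left _ _)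
  have hm2 : m ≤ m₂ := by
    rw [hm]; split
    · exact min_le_right _ _
    · exact le_trans (min_le_left _ _) (min_le_right _ _)
  have hkey : (ℓ : ℤ) ^ m ∣ r₂ - (ℓ : ℤ) ^ (n₂ - n₁) * r₁ := by
    by_cases h : r₂ = (ℓ : ℤ) ^ (n₂ - n₁) * r₁
    · rw [h, sub_self]; exact dvd_zero _
    · rw [hm, if_neg h]
      exact dvd_trans (pow_dvd_pow _ (min_le_right _ _)) (padicValInt_dvd _)
  -- Bezout-type combination in ℤ_[ℓ]
  have H3 : ∃ u v w : ℤ_[ℓ], u * (ℓ : ℤ_[ℓ]) ^ m₁ + v * (ℓ : ℤ_[ℓ]) ^ m₂ +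
      w * ((r₂ - (ℓ : ℤ) ^ (n₂ - n₁) * r₁ : ℤ) : ℤ_[ℓ]) = (ℓ : ℤ_[ℓ]) ^ m := by
    by_cases h : r₂ = (ℓ : ℤ) ^ (n₂ - n₁) * r₁
    · rcases le_total m₁ m₂ with h' | h'
      · exact ⟨1, 0, 0, by simp [hm, if_pos h, min_eq_left h']⟩
      · exact ⟨0, 1, 0, by simp [hm, if_pos h, min_eq_right h']⟩
    · set d : ℤ := r₂ - (ℓ : ℤ) ^ (n₂ - n₁) * r₁ with hd
      set ν : ℕ := padicValInt ℓ d with hν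
      have hd0 : d ≠ 0 := sub_ne_zero.mpr h
      by_cases hν' : ν ≤ min m₁ m₂
      · have hmν : m = ν := by rw [hm, if_neg h, min_eq_right hν']
        obtain ⟨e, he⟩ := padicValInt_dvd (p := ℓ) d
        have hne : ¬ (ℓ : ℤ) ∣ e := by
          intro hdvd
          have h2 : (ℓ : ℤ) ^ (ν + 1) ∣ d := by
            rw [he, pow_succ]; exact mul_dvd_mul_left _ hdvd
          rcases (padicValInt_dvd_iff (ν + 1) d).mp h2 with h3 | h3
          · exact hd0 h3
          · omega
        have hunit : IsUnit ((e : ℤ) : ℤ_[ℓ]) := by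
          rw [PadicInt.isUnit_iff]
          exact le_antisymm (PadicInt.norm_le_one _)
            (le_of_not_gt fun hlt => hne ((PadicInt.norm_int_lt_one_iff_dvd e).mp hlt))
        obtain ⟨w, hw⟩ := hunit.exists_left_inv
        refine ⟨0, 0, w, ?_⟩
        have : ((d : ℤ) : ℤ_[ℓ]) = (ℓ : ℤ_[ℓ]) ^ ν * ((e : ℤ) : ℤ_[ℓ]) := by
          rw [he]; push_cast; ring
        rw [this, hmν]
        calc 0 * (ℓ : ℤ_[ℓ]) ^ m₁ + 0 * (ℓ : ℤ_[ℓ]) ^ m₂ + w * ((ℓ : ℤ_[ℓ]) ^ ν * ((e : ℤ) : ℤ_[ℓ]))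
            = (ℓ : ℤ_[ℓ]) ^ ν * (w * ((e : ℤ) : ℤ_[ℓ])) := by ring
          _ = (ℓ : ℤ_[ℓ]) ^ ν := by rw [hw, mul_one]
      · have hmm : m = min m₁ m₂ := by
          rw [hm, if_neg h, min_eq_left (le_of_not_ge hν')]
        rcases le_total m₁ m₂ with h' | h'
        · exact ⟨1, 0, 0, by simp [hmm, min_eq_left h']⟩
        · exact ⟨0, 1, 0, by simp [hmm, min_eq_right h']⟩
  obtain ⟨u, v, w, huvw⟩ := H3
  have E3 : ((r₂ - (ℓ : ℤ) ^ (n₂ - n₁) * r₁ : ℤ) : ℤ_[ℓ]) =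
      ((r₂ : ℤ) : ℤ_[ℓ]) - (ℓ : ℤ_[ℓ]) ^ (n₂ - n₁) * ((r₁ : ℤ) : ℤ_[ℓ]) := by
    push_cast; ring
  rw [E3] at huvw
  set q₁ : ℤ := r₁ / (ℓ : ℤ) ^ m with hq₁def
  have hq₁ : r₁ % (ℓ : ℤ) ^ m + (ℓ : ℤ) ^ m * q₁ = r₁ := Int.emod_add_mul_ediv r₁ _
  have hdvd2 : (ℓ : ℤ) ^ m ∣ r₂ - (ℓ : ℤ) ^ (n₂ - n₁) * (r₁ % (ℓ : ℤ) ^ m) := by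
    have h2 : (ℓ : ℤ) ^ m ∣ (ℓ : ℤ) ^ (n₂ - n₁) * (r₁ - r₁ % (ℓ : ℤ) ^ m) :=
      Dvd.dvd.mul_left ⟨q₁, by linarith⟩ _
    have h3 := dvd_add hkey h2
    rwa [show r₂ - (ℓ : ℤ) ^ (n₂ - n₁) * r₁ + (ℓ : ℤ) ^ (n₂ - n₁) * (r₁ - r₁ % (ℓ : ℤ) ^ m)
      = r₂ - (ℓ : ℤ) ^ (n₂ - n₁) * (r₁ % (ℓ : ℤ) ^ m) from by ring] at h3
  obtain ⟨q₂, hq₂⟩ := hdvd2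
  have E1 : ((r₁ % (ℓ : ℤ) ^ m : ℤ) : ℤ_[ℓ]) + (ℓ : ℤ_[ℓ]) ^ m * ((q₁ : ℤ) : ℤ_[ℓ])
      = ((r₁ : ℤ) : ℤ_[ℓ]) := by exact_mod_cast congrArg (Int.cast : ℤ → ℤ_[ℓ]) hq₁
  have E2 : ((r₂ : ℤ) : ℤ_[ℓ]) = (ℓ : ℤ_[ℓ]) ^ (n₂ - n₁) * ((r₁ % (ℓ : ℤ) ^ m : ℤ) : ℤ_[ℓ])
      + (ℓ : ℤ_[ℓ]) ^ m * ((q₂ : ℤ) : ℤ_[ℓ]) := by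
    have : r₂ = (ℓ : ℤ) ^ (n₂ - n₁) * (r₁ % (ℓ : ℤ) ^ m) + (ℓ : ℤ) ^ m * q₂ := by linarith
    exact_mod_cast congrArg (Int.cast : ℤ → ℤ_[ℓ]) this
  have hM1 : (ℓ : ℤ_[ℓ]) ^ (m₁ - m) * (ℓ : ℤ_[ℓ]) ^ m = (ℓ : ℤ_[ℓ]) ^ m₁ := by
    rw [← pow_add]; congr 1; omega
  have hM2 : (ℓ : ℤ_[ℓ]) ^ (m₂ - m) * (ℓ : ℤ_[ℓ]) ^ m = (ℓ : ℤ_[ℓ]) ^ m₂ := by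
    rw [← pow_add]; congr 1; omega
  have hTn : (ℓ : ℤ_[ℓ]) ^ (n₂ - n₁) * (ℓ : ℤ_[ℓ]) ^ n₁ = (ℓ : ℤ_[ℓ]) ^ n₂ := by
    rw [← pow_add]; congr 1; omega
  set G : Matrix (Fin 2) (Fin 2) ℤ_[ℓ] :=
    !![(ℓ : ℤ_[ℓ]) ^ n₁, ((r₁ % (ℓ : ℤ) ^ m : ℤ) : ℤ_[ℓ]); 0, (ℓ : ℤ_[ℓ]) ^ m] with hG
  set A1 : Matrix (Fin 2) (Fin 2) ℤ_[ℓ] :=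
    !![(ℓ : ℤ_[ℓ]) ^ n₁, ((r₁ : ℤ) : ℤ_[ℓ]); 0, (ℓ : ℤ_[ℓ]) ^ m₁] with hA1
  set A2 : Matrix (Fin 2) (Fin 2) ℤ_[ℓ] :=
    !![(ℓ : ℤ_[ℓ]) ^ n₂, ((r₂ : ℤ) : ℤ_[ℓ]); 0, (ℓ : ℤ_[ℓ]) ^ m₂] with hA2
  refine le_antisymm (sup_le ?_ ?_) ?_
  · rw [Ideal.span_le, Set.singleton_subset_iff, SetLike.mem_coe]
    refine Submodule.mem_span_singleton.mpr
      ⟨!![1, ((q₁ : ℤ) : ℤ_[ℓ]); 0, (ℓ : ℤ_[ℓ]) ^ (m₁ - m)], ?_⟩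
    rw [smul_eq_mul, hG, hA1, Matrix.mul_fin_two]
    ext i j
    fin_cases i <;> fin_cases j <;> simp
    · linear_combination E1
    · linear_combination hM1
  · rw [Ideal.span_le, Set.singleton_subset_iff, SetLike.mem_coe]
    refine Submodule.mem_span_singleton.mpr
      ⟨!![(ℓ : ℤ_[ℓ]) ^ (n₂ - n₁), ((q₂ : ℤ) : ℤ_[ℓ]); 0, (ℓ : ℤ_[ℓ]) ^ (m₂ - m)], ?_⟩
    rw [smul_eq_mul, hG, hA2, Matrix.mul_fin_two]
    ext i j
    fin_cases i <;> fin_cases j <;> simp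
    · linear_combination hTn
    · linear_combination -E2
    · linear_combination hM2
  · rw [Ideal.span_le, Set.singleton_subset_iff, SetLike.mem_coe]
    have h1 : !![1 + ((q₁ : ℤ) : ℤ_[ℓ]) * w * (ℓ : ℤ_[ℓ]) ^ (n₂ - n₁),
        -(((q₁ : ℤ) : ℤ_[ℓ]) * u); -(w * (ℓ : ℤ_[ℓ]) ^ (n₂ - n₁)), u] * A1
        ∈ Ideal.span {A1} :=
      Submodule.mem_span_singleton.mpr ⟨_, rfl⟩
    have h2 : !![-(((q₁ : ℤ) : ℤ_[ℓ]) * w), -(((q₁ : ℤ) : ℤ_[ℓ]) * v); w, v] * A2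
        ∈ Ideal.span {A2} :=
      Submodule.mem_span_singleton.mpr ⟨_, rfl⟩
    refine Submodule.mem_sup.mpr ⟨_, h1, _, h2, ?_⟩
    rw [hG, hA1, hA2, Matrix.mul_fin_two, Matrix.mul_fin_two]
    ext i j
    fin_cases i <;> fin_cases j <;> simp
    · linear_combination ((q₁ : ℤ) : ℤ_[ℓ]) * w * hTn
    · linear_combination -E1 - ((q₁ : ℤ) : ℤ_[ℓ]) * huvw
    · linear_combination -w * hTn
    · linear_combination huvw
end

section
/- Let ℓ be a prime, let σ be a ring automorphism of M₂(ℤ_[ℓ]), let M ∈ M₂(ℤ_[ℓ]), and let d₁ ≤ d₂ be natural numbers. If M has ℓ-type (d₁, d₂), then σ(M) has ℓ-type (d₁, d₂). (Well-definedness of the ℓ-type: ring automorphisms of M₂(ℤ_[ℓ]) preserve the ℓ-type of matrices.) -/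
open Matrix


/-- A nontrivial idempotent 2×2 matrix over a local domain is conjugate to `diag(1,0)`. -/
lemma idem_conj {R : Type*} [CommRing R] [IsDomain R] [IsLocalRing R]
    (P : Matrix (Fin 2) (Fin 2) R) (hP : P * P = P) (h0 : P ≠ 0) (h1 : P ≠ 1) :
    ∃ U : Matrix (Fin 2) (Fin 2) R, IsUnit U ∧ P * U = U * Matrix.diagonal ![1, 0] := by
  obtain ⟨a, b, c, d, rfl⟩ : ∃ a b c d, P = !![a, b; c, d] :=
    ⟨_, _, _, _, Matrix.eta_fin_two P⟩
  have e11 : a * a + b * c = a := by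
    have := congrFun (congrFun hP 0) 0
    simpa [Matrix.mul_apply, Fin.sum_univ_two] using this
  have e12 : a * b + b * d = b := by
    have := congrFun (congrFun hP 0) 1
    simpa [Matrix.mul_apply, Fin.sum_univ_two] using this
  have e21 : c * a + d * c = c := by
    have := congrFun (congrFun hP 1) 0
    simpa [Matrix.mul_apply, Fin.sum_univ_two] using this
  have e22 : c * b + d * d = d := by
    have := congrFun (congrFun hP 1) 1
    simpa [Matrix.mul_apply, Fin.sum_univ_two] using this
  have hsum : a + d = 1 := by
    have key : (a - d) * (a + d - 1) = 0 := by linear_combination e11 - e22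
    rcases mul_eq_zero.mp key with h | h
    · have had : a = d := sub_eq_zero.mp h
      have hb0 : b * (a + d - 1) = 0 := by linear_combination e12
      have hc0 : (a + d - 1) * c = 0 := by linear_combination e21
      rcases mul_eq_zero.mp hb0 with hb | hs
      · rcases mul_eq_zero.mp hc0 with hs | hc
        · exact sub_eq_zero.mp hs
        · subst hb hc
          have haa : a * (a - 1) = 0 := by linear_combination e11
          rcases mul_eq_zero.mp haa with h0' | h1'
          · subst h0'
            obtain rfl : d = 0 := had.symm
            exact absurd (by ext i j; fin_cases i <;> fin_cases j <;> simp : (!![(0:R),0;0,0]) = 0) h0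
          · have ha1 : a = 1 := sub_eq_zero.mp h1'
            subst ha1
            have hd1 : d = 1 := had.symm
            subst hd1
            exact absurd (by ext i j; fin_cases i <;> fin_cases j <;>
              simp [Matrix.one_apply]) h1
      · exact sub_eq_zero.mp hs
    · exact sub_eq_zero.mp h
  have hdet : a * d - b * c = 0 := by linear_combination a * hsum - e11
  rcases IsLocalRing.isUnit_or_isUnit_of_add_one hsum with hu | hu
  · refine ⟨!![a, b; c, -a], ?_, ?_⟩
    · rw [Matrix.isUnit_iff_isUnit_det]
      have : (!![a, b; c, -a] : Matrix (Fin 2) (Fin 2) R).det = -a := by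
        rw [Matrix.det_fin_two_of]; linear_combination -e11
      rw [this]; exact hu.neg
    · ext i j
      fin_cases i <;> fin_cases j <;>
        simp [Matrix.mul_apply, Fin.sum_univ_two, Matrix.diagonal] <;>
        first
          | linear_combination e11
          | linear_combination e21
          | linear_combination -hdet
          | linear_combination hdet
          | ring
  · refine ⟨!![b, d; d, -c], ?_, ?_⟩
    · rw [Matrix.isUnit_iff_isUnit_det]
      have : (!![b, d; d, -c] : Matrix (Fin 2) (Fin 2) R).det = -d := by
        rw [Matrix.det_fin_two_of]; linear_combination -e22
      rw [this]; exact hu.neg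
    · ext i j
      fin_cases i <;> fin_cases j <;>
        simp [Matrix.mul_apply, Fin.sum_univ_two, Matrix.diagonal] <;>
        first
          | linear_combination e12
          | linear_combination e22
          | linear_combination -hdet
          | linear_combination hdet
          | ring

lemma sigma_diag_comm (ℓ : ℕ) [Fact ℓ.Prime]
    (σ : Matrix (Fin 2) (Fin 2) ℤ_[ℓ] ≃+* Matrix (Fin 2) (Fin 2) ℤ_[ℓ])
    (d₁ d₂ : ℕ) (hd : d₁ ≤ d₂) :
    ∃ U : Matrix (Fin 2) (Fin 2) ℤ_[ℓ], IsUnit U ∧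
      σ (Matrix.diagonal ![(ℓ : ℤ_[ℓ]) ^ d₁, (ℓ : ℤ_[ℓ]) ^ d₂]) * U
        = U * Matrix.diagonal ![(ℓ : ℤ_[ℓ]) ^ d₁, (ℓ : ℤ_[ℓ]) ^ d₂] := by
  have hE2 : (Matrix.diagonal ![1, 0] : Matrix (Fin 2) (Fin 2) ℤ_[ℓ]) *
      Matrix.diagonal ![1, 0] = Matrix.diagonal ![1, 0] := by
    ext i j
    fin_cases i <;> fin_cases j <;>
      simp [Matrix.mul_apply, Fin.sum_univ_two, Matrix.diagonal_apply]
  have hE0 : (Matrix.diagonal ![1, 0] : Matrix (Fin 2) (Fin 2) ℤ_[ℓ]) ≠ 0 := by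
    intro hh
    have := congrFun (congrFun hh 0) 0
    simp [Matrix.diagonal_apply] at this
  have hE1 : (Matrix.diagonal ![1, 0] : Matrix (Fin 2) (Fin 2) ℤ_[ℓ]) ≠ 1 := by
    intro hh
    have := congrFun (congrFun hh 1) 1
    simp [Matrix.diagonal_apply, Matrix.one_apply] at this
  have hPP : σ (Matrix.diagonal ![1, 0]) * σ (Matrix.diagonal ![1, 0]) =
      σ (Matrix.diagonal ![1, 0]) := by rw [← _root_.map_mul, hE2]
  have hP0 : σ (Matrix.diagonal ![1, 0]) ≠ 0 := by
    intro hh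
    exact hE0 (σ.injective (by rw [hh, map_zero]))
  have hP1 : σ (Matrix.diagonal ![1, 0]) ≠ 1 := by
    intro hh
    exact hE1 (σ.injective (hh.trans σ.map_one.symm))
  obtain ⟨U, hU, hPU⟩ := idem_conj _ hPP hP0 hP1
  have hLk : ∀ k : ℕ, ((ℓ : Matrix (Fin 2) (Fin 2) ℤ_[ℓ])) ^ k =
      Matrix.diagonal (fun _ => (ℓ : ℤ_[ℓ]) ^ k) := by
    intro k
    rw [← Matrix.diagonal_natCast, Matrix.diagonal_pow]
    rfl
  have hDfact : (Matrix.diagonal ![(ℓ : ℤ_[ℓ]) ^ d₁, (ℓ : ℤ_[ℓ]) ^ d₂]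
        : Matrix (Fin 2) (Fin 2) ℤ_[ℓ]) =
      (ℓ : Matrix (Fin 2) (Fin 2) ℤ_[ℓ]) ^ d₁ *
        (Matrix.diagonal ![1, 0] +
          (ℓ : Matrix (Fin 2) (Fin 2) ℤ_[ℓ]) ^ (d₂ - d₁) * (1 - Matrix.diagonal ![1, 0])) := by
    rw [hLk d₁, hLk (d₂ - d₁)]
    ext i j
    fin_cases i <;> fin_cases j <;>
      simp [Matrix.mul_apply, Fin.sum_univ_two, Matrix.diagonal_apply, Matrix.one_apply,
        ← pow_add, Nat.add_sub_cancel' hd]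
  refine ⟨U, hU, ?_⟩
  have hσD : σ (Matrix.diagonal ![(ℓ : ℤ_[ℓ]) ^ d₁, (ℓ : ℤ_[ℓ]) ^ d₂]) =
      (ℓ : Matrix (Fin 2) (Fin 2) ℤ_[ℓ]) ^ d₁ *
        (σ (Matrix.diagonal ![1, 0]) +
          (ℓ : Matrix (Fin 2) (Fin 2) ℤ_[ℓ]) ^ (d₂ - d₁) *
            (1 - σ (Matrix.diagonal ![1, 0]))) := by
    rw [hDfact]
    simp only [_root_.map_mul, _root_.map_add, _root_.map_sub, _root_.map_one, map_pow,
      map_natCast]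
  have hLU : ∀ k : ℕ, (ℓ : Matrix (Fin 2) (Fin 2) ℤ_[ℓ]) ^ k * U =
      U * (ℓ : Matrix (Fin 2) (Fin 2) ℤ_[ℓ]) ^ k :=
    fun k => (Nat.cast_commute (ℓ : ℕ) U).pow_left k
  have hkey : (σ (Matrix.diagonal ![1, 0]) +
      (ℓ : Matrix (Fin 2) (Fin 2) ℤ_[ℓ]) ^ (d₂ - d₁) * (1 - σ (Matrix.diagonal ![1, 0]))) * U =
      U * (Matrix.diagonal ![1, 0] +
        (ℓ : Matrix (Fin 2) (Fin 2) ℤ_[ℓ]) ^ (d₂ - d₁) * (1 - Matrix.diagonal ![1, 0])) := by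
    set P := σ (Matrix.diagonal ![1, 0]) with hP'
    set L := (ℓ : Matrix (Fin 2) (Fin 2) ℤ_[ℓ]) ^ (d₂ - d₁) with hL'
    have expand : (P + L * (1 - P)) * U = P * U + L * U - L * (P * U) := by noncomm_ring
    have hLUE : L * (U * Matrix.diagonal ![1, 0]) =
        U * (L * Matrix.diagonal ![1, 0]) := by rw [← mul_assoc, hLU, mul_assoc]
    rw [expand, hPU, hLUE, hLU]
    noncomm_ring
  calc σ (Matrix.diagonal ![(ℓ : ℤ_[ℓ]) ^ d₁, (ℓ : ℤ_[ℓ]) ^ d₂]) * U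
      = (ℓ : Matrix (Fin 2) (Fin 2) ℤ_[ℓ]) ^ d₁ *
        ((σ (Matrix.diagonal ![1, 0]) +
          (ℓ : Matrix (Fin 2) (Fin 2) ℤ_[ℓ]) ^ (d₂ - d₁) *
            (1 - σ (Matrix.diagonal ![1, 0]))) * U) := by rw [hσD, mul_assoc]
    _ = (ℓ : Matrix (Fin 2) (Fin 2) ℤ_[ℓ]) ^ d₁ *
        (U * (Matrix.diagonal ![1, 0] +
          (ℓ : Matrix (Fin 2) (Fin 2) ℤ_[ℓ]) ^ (d₂ - d₁) *
            (1 - Matrix.diagonal ![1, 0]))) := by rw [hkey]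
    _ = ((ℓ : Matrix (Fin 2) (Fin 2) ℤ_[ℓ]) ^ d₁ * U) *
        (Matrix.diagonal ![1, 0] +
          (ℓ : Matrix (Fin 2) (Fin 2) ℤ_[ℓ]) ^ (d₂ - d₁) *
            (1 - Matrix.diagonal ![1, 0])) := by rw [mul_assoc]
    _ = (U * (ℓ : Matrix (Fin 2) (Fin 2) ℤ_[ℓ]) ^ d₁) *
        (Matrix.diagonal ![1, 0] +
          (ℓ : Matrix (Fin 2) (Fin 2) ℤ_[ℓ]) ^ (d₂ - d₁) *
            (1 - Matrix.diagonal ![1, 0])) := by rw [hLU]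
    _ = U * ((ℓ : Matrix (Fin 2) (Fin 2) ℤ_[ℓ]) ^ d₁ *
        (Matrix.diagonal ![1, 0] +
          (ℓ : Matrix (Fin 2) (Fin 2) ℤ_[ℓ]) ^ (d₂ - d₁) *
            (1 - Matrix.diagonal ![1, 0]))) := by rw [mul_assoc]
    _ = U * Matrix.diagonal ![(ℓ : ℤ_[ℓ]) ^ d₁, (ℓ : ℤ_[ℓ]) ^ d₂] := by rw [← hDfact]

/-- A matrix `M ∈ M₂(ℤ_ℓ)` has `ℓ`-type `(d₁, d₂)` (with `d₁ ≤ d₂`) if there exist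
invertible matrices `S, T` such that `S · M · T = diag(ℓ^d₁, ℓ^d₂)`. -/
def HasLType (ℓ : ℕ) [Fact ℓ.Prime] (M : Matrix (Fin 2) (Fin 2) ℤ_[ℓ])
    (d₁ d₂ : ℕ) : Prop :=
  ∃ S T : Matrix (Fin 2) (Fin 2) ℤ_[ℓ], IsUnit S ∧ IsUnit T ∧
    S * M * T = Matrix.diagonal ![(ℓ : ℤ_[ℓ]) ^ d₁, (ℓ : ℤ_[ℓ]) ^ d₂]

/-- Ring automorphisms of `M₂(ℤ_ℓ)` preserve the `ℓ`-type of matrices. -/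
theorem lType_ringAut_invariant (ℓ : ℕ) [Fact ℓ.Prime]
    (σ : Matrix (Fin 2) (Fin 2) ℤ_[ℓ] ≃+* Matrix (Fin 2) (Fin 2) ℤ_[ℓ])
    (M : Matrix (Fin 2) (Fin 2) ℤ_[ℓ]) (d₁ d₂ : ℕ) (hd : d₁ ≤ d₂)
    (h : HasLType ℓ M d₁ d₂) :
    HasLType ℓ (σ M) d₁ d₂ := by
  obtain ⟨S, T, hS, hT, hSMT⟩ := h
  obtain ⟨U, hU, hmain⟩ := sigma_diag_comm ℓ σ d₁ d₂ hd
  have hdetU : IsUnit U.det := (Matrix.isUnit_iff_isUnit_det U).mp hU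
  refine ⟨U⁻¹ * σ S, σ T * U, (Matrix.isUnit_nonsing_inv_iff.mpr hU).mul (hS.map σ),
    (hT.map σ).mul hU, ?_⟩
  have hσ : σ S * σ M * σ T = σ (Matrix.diagonal ![(ℓ : ℤ_[ℓ]) ^ d₁, (ℓ : ℤ_[ℓ]) ^ d₂]) := by
    rw [← _root_.map_mul, ← _root_.map_mul, hSMT]
  calc U⁻¹ * σ S * σ M * (σ T * U)
      = U⁻¹ * (σ S * σ M * σ T) * U := by noncomm_ring
    _ = U⁻¹ * σ (Matrix.diagonal ![(ℓ : ℤ_[ℓ]) ^ d₁, (ℓ : ℤ_[ℓ]) ^ d₂]) * U := by rw [hσ]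
    _ = U⁻¹ * (σ (Matrix.diagonal ![(ℓ : ℤ_[ℓ]) ^ d₁, (ℓ : ℤ_[ℓ]) ^ d₂]) * U) := by
        rw [mul_assoc]
    _ = U⁻¹ * (U * Matrix.diagonal ![(ℓ : ℤ_[ℓ]) ^ d₁, (ℓ : ℤ_[ℓ]) ^ d₂]) := by rw [hmain]
    _ = (U⁻¹ * U) * Matrix.diagonal ![(ℓ : ℤ_[ℓ]) ^ d₁, (ℓ : ℤ_[ℓ]) ^ d₂] := by rw [mul_assoc]
    _ = Matrix.diagonal ![(ℓ : ℤ_[ℓ]) ^ d₁, (ℓ : ℤ_[ℓ]) ^ d₂] := by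
        rw [Matrix.nonsing_inv_mul U hdetU, one_mul]
end

section
/- Let ℓ be a prime and let α, β ∈ M₂(ℤ_[ℓ]) be matrices such that det(β) ≠ 0 and det(α) = u·det(β) for some unit u of ℤ_[ℓ]. Then the following are equivalent: (i) there exist matrices S, T invertible in M₂(ℤ_[ℓ]) such that S·α·T = β (i.e. α and β have the same Smith normal form, hence the same ℓ-type); (ii) there exists a matrix y invertible in M₂(ℤ_[ℓ]) such that α·y belongs to the left ideal M₂(ℤ_[ℓ])·β. (Matrix form of the lemma: the ℓ-types of I and α are the same if and only if there exists an invertible y with α·y ∈ I ⊗ ℤ_ℓ.) -/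
/-- Matrix form of the localization lemma: if `det β ≠ 0` and `det α = u · det β` for a
unit `u` of `ℤ_ℓ`, then `α` and `β` have the same Smith normal form (the same `ℓ`-type)
if and only if there exists an invertible matrix `y` with `α · y` in the left ideal
generated by `β`. -/
theorem smithNormalForm_iff_unit_mem_leftIdeal (ℓ : ℕ) [Fact ℓ.Prime]
    (α β : Matrix (Fin 2) (Fin 2) ℤ_[ℓ]) (hβ : β.det ≠ 0)
    (hdet : ∃ u : ℤ_[ℓ]ˣ, α.det = (u : ℤ_[ℓ]) * β.det) :
    (∃ S T : Matrix (Fin 2) (Fin 2) ℤ_[ℓ], IsUnit S ∧ IsUnit T ∧ S * α * T = β) ↔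
      (∃ y : Matrix (Fin 2) (Fin 2) ℤ_[ℓ], IsUnit y ∧
        α * y ∈ Ideal.span {β}) := by
  constructor
  · rintro ⟨S, T, hS, hT, h⟩
    refine ⟨T, hT, ?_⟩
    rw [Ideal.mem_span_singleton']
    refine ⟨(↑hS.unit⁻¹ : Matrix (Fin 2) (Fin 2) ℤ_[ℓ]), ?_⟩
    have : (↑hS.unit⁻¹ : Matrix (Fin 2) (Fin 2) ℤ_[ℓ]) * (S * α * T) = α * T := by
      rw [mul_assoc S α T, ← mul_assoc, hS.val_inv_mul, one_mul]
    rw [← h]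
    exact this
  · rintro ⟨y, hy, hmem⟩
    rw [Ideal.mem_span_singleton'] at hmem
    obtain ⟨M, hM⟩ := hmem
    obtain ⟨u, hu⟩ := hdet
    have hdetM : IsUnit M.det := by
      have h1 : M.det * β.det = α.det * y.det := by
        rw [← Matrix.det_mul, hM, Matrix.det_mul]
      have h2 : M.det * β.det = (u : ℤ_[ℓ]) * y.det * β.det := by
        rw [h1, hu]; ring
      have h3 : M.det = (u : ℤ_[ℓ]) * y.det := mul_right_cancel₀ hβ h2
      rw [h3]
      exact u.isUnit.mul ((Matrix.isUnit_iff_isUnit_det y).mp hy)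
    have hMu : IsUnit M := (Matrix.isUnit_iff_isUnit_det M).mpr hdetM
    refine ⟨(↑hMu.unit⁻¹ : Matrix (Fin 2) (Fin 2) ℤ_[ℓ]), y, hMu.unit⁻¹.isUnit, hy, ?_⟩
    rw [mul_assoc, ← hM, ← mul_assoc, hMu.val_inv_mul, one_mul]
end
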